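/- arXiv:2405.04927 — 3 statements merged into one kernel-verified Lean document; each statement's English description precedes it below -/
import Mathlib

section
/- Let $R$ be a commutative ring, $m \geq 1$, and let $\lambda_1,\dots,\lambda_m \in R$. Let $A$ be the $m \times m$ companion-type matrix whose $(i,i+1)$ entries equal $1$ for $i=1,\dots,m-1$, whose last row is $(c_1, c_2, \dots, c_m)$ where the $c_j$ are determined by $\tau^m - \sum_{j=1}^m c_j \tau^{j-1} = \prod_{i=1}^m (\tau - \lambda_i)$, and all other entries zero. Let $T$ be the lower unitriangular $m\times m$ matrix with entries $T_{j,k} = h_{j-k}(\lambda_1,\dots,\lambda_k)$ for $j \geq k$ (where $h_r$ denotes the complete homogeneous symmetric polynomial of degree $r$), and let $J$ be the upper bidiagonal matrix with diagonal entries $\lambda_1,\dots,\lambda_m$ and superdiagonal entries all equal to $1$. Then $A T = T J$. -/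
open Finset Polynomial

/-- Complete homogeneous symmetric polynomial `h_r(x_1,…,x_k)`. -/
def hpoly {R : Type*} [CommSemiring R] (r : ℕ) {k : ℕ} (x : Fin k → R) : R :=
  ∑ α ∈ Finset.Nat.antidiagonalTuple k r, ∏ i, x i ^ α i

/-- Elementary symmetric polynomial `e_r(x_1,…,x_k)`. -/
def epoly {R : Type*} [CommSemiring R] (r : ℕ) {k : ℕ} (x : Fin k → R) : R :=
  ∑ s ∈ Finset.powersetCard r (Finset.univ : Finset (Fin k)), ∏ i ∈ s, x i

/-- Lower unitriangular transformation matrix `T` with `T j k = h_{j-k}(λ_1,…,λ_k)`. -/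
def Tmat {R : Type*} [CommSemiring R] {m : ℕ} (lam : Fin m → R) : Matrix (Fin m) (Fin m) R :=
  Matrix.of fun j k : Fin m =>
    if (k:ℕ) ≤ (j:ℕ) then
      hpoly ((j:ℕ) - (k:ℕ)) (fun i : Fin ((k:ℕ)+1) => lam (Fin.castLE k.isLt i))
    else 0

/-- Sylvester companion matrix with last row `c`. -/
def Amat {R : Type*} [CommSemiring R] {m : ℕ} (c : Fin m → R) : Matrix (Fin m) (Fin m) R :=
  Matrix.of fun i j : Fin m =>
    if (j:ℕ) = (i:ℕ) + 1 then 1 else if (i:ℕ) = m - 1 then c j else 0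

/-- Upper bidiagonal matrix with diagonal `λ_i` and superdiagonal `1`. -/
def Jmat {R : Type*} [CommSemiring R] {m : ℕ} (lam : Fin m → R) : Matrix (Fin m) (Fin m) R :=
  Matrix.of fun i j : Fin m =>
    if i = j then lam i else if (j:ℕ) = (i:ℕ) + 1 then 1 else 0

/-!
Write `u_k` for column `k` of `T`, prolonged to the sequence `j ↦ h_{j-k}(λ_1,…,λ_{k+1})`, and `S`
for the shift of sequences. The recursion
`h_{n+1}(x_1,…,x_{k+1}) = x_{k+1} h_n(x_1,…,x_{k+1}) + h_{n+1}(x_1,…,x_k)` reads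
`S u_k = λ_{k+1} u_k + u_{k-1}`, so column `k` of `T J` is `S u_k`. So is column `k` of `A T`, except
in the last row, which is `∑ c_j u_k(j)`. Iterating the recursion, `∏_{i ≤ k+1} (S - λ_i)`
annihilates `u_k`, hence so does its multiple `∏_i (S - λ_i) = S^m - ∑ c_j S^{j-1}`; at index `0`
this says `u_k(m) = ∑ c_j u_k(j)`.
-/

section CompleteHomogeneous

variable {R : Type*} [CommSemiring R]

lemma hpoly_zero {k : ℕ} (x : Fin k → R) : hpoly 0 x = 1 := by
  simp [hpoly, Finset.Nat.antidiagonalTuple_zero_right]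

lemma hpoly_succ_of_fin_zero (n : ℕ) (x : Fin 0 → R) : hpoly (n + 1) x = 0 := by
  simp [hpoly, Finset.Nat.antidiagonalTuple_zero_succ]

lemma hpoly_eq_sum_antidiagonal (n : ℕ) {k : ℕ} (x : Fin (k + 1) → R) :
    hpoly n x = ∑ p ∈ antidiagonal n, x (Fin.last k) ^ p.1 * hpoly p.2 (Fin.init x) := by
  simp_rw [hpoly, Finset.mul_sum, Finset.sum_sigma']
  refine Finset.sum_nbij' (fun α => ⟨(α (Fin.last k), ∑ i, Fin.init α i), Fin.init α⟩)
    (fun q => Fin.snoc q.2 q.1.1) ?_ ?_ ?_ ?_ ?_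
  · intro α hα
    simp_all [Finset.Nat.mem_antidiagonalTuple, Fin.sum_univ_castSucc, Fin.init, add_comm]
  · rintro ⟨⟨a, b⟩, β⟩ hq
    simp_all [Finset.Nat.mem_antidiagonalTuple, Fin.sum_univ_castSucc, add_comm]
  · intro α _
    simp
  · rintro ⟨⟨a, b⟩, β⟩ hq
    simp_all [Finset.Nat.mem_antidiagonalTuple]
  · intro α _
    simp [Fin.prod_univ_castSucc, Fin.init, mul_comm]

lemma hpoly_succ (n : ℕ) {k : ℕ} (x : Fin (k + 1) → R) :
    hpoly (n + 1) x = x (Fin.last k) * hpoly n x + hpoly (n + 1) (Fin.init x) := by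
  rw [hpoly_eq_sum_antidiagonal, Finset.Nat.sum_antidiagonal_succ, hpoly_eq_sum_antidiagonal n,
    Finset.mul_sum, pow_zero, one_mul, add_comm]
  simp only [pow_succ, mul_assoc, mul_left_comm]

/-- Offset so that column `k` of `Tmat lam` is `hpolySeq` of the first `k + 1` entries of `lam`,
and the empty tuple gives the zero sequence. -/
def hpolySeq {k : ℕ} (x : Fin k → R) (j : ℕ) : R :=
  if k ≤ j + 1 then hpoly (j + 1 - k) x else 0

lemma hpolySeq_fin_zero (x : Fin 0 → R) : hpolySeq x = 0 := by
  ext j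
  simp [hpolySeq, hpoly_succ_of_fin_zero]

lemma hpolySeq_succ {k : ℕ} (x : Fin (k + 1) → R) (j : ℕ) :
    hpolySeq x (j + 1) = x (Fin.last k) * hpolySeq x j + hpolySeq (Fin.init x) j := by
  unfold hpolySeq
  rcases lt_trichotomy (j + 1) k with h | rfl | h
  · rw [if_neg (by omega), if_neg (by omega), if_neg (by omega), mul_zero, add_zero]
  · simp [hpoly_zero]
  · rw [if_pos (by omega), if_pos (by omega), if_pos h.le,
      show j + 1 + 1 - (k + 1) = j - k + 1 by omega, hpoly_succ,
      show j + 1 - (k + 1) = j - k by omega, show j + 1 - k = j - k + 1 by omega]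

end CompleteHomogeneous

section Shift

variable {R : Type*} [CommRing R]

abbrev seqShift : (ℕ → R) →ₗ[R] (ℕ → R) := LinearMap.funLeft R R Nat.succ

lemma seqShift_pow_apply (j : ℕ) (u : ℕ → R) (n : ℕ) : (seqShift ^ j) u n = u (n + j) := by
  induction j generalizing n with
  | zero => rfl
  | succ j ih =>
    rw [pow_succ', Module.End.mul_apply, LinearMap.funLeft_apply, ih]
    congr 1; omega

lemma aeval_seqShift_X_sub_C_hpolySeq {k : ℕ} (x : Fin (k + 1) → R) :
    aeval seqShift (X - C (x (Fin.last k))) (hpolySeq x) = hpolySeq (Fin.init x) := by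
  ext j
  simp [hpolySeq_succ]

lemma aeval_seqShift_prod_hpolySeq {k : ℕ} (x : Fin k → R) :
    aeval seqShift (∏ i, (X - C (x i))) (hpolySeq x) = 0 := by
  induction k with
  | zero => simp [hpolySeq_fin_zero]
  | succ k ih =>
    rw [Fin.prod_univ_castSucc, map_mul, Module.End.mul_apply, aeval_seqShift_X_sub_C_hpolySeq]
    exact ih (Fin.init x)

lemma aeval_seqShift_hpolySeq_of_dvd {k : ℕ} (x : Fin k → R) {p : R[X]}
    (hp : ∏ i, (X - C (x i)) ∣ p) : aeval seqShift p (hpolySeq x) = 0 := by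
  obtain ⟨q, rfl⟩ := hp
  rw [mul_comm, map_mul, Module.End.mul_apply, aeval_seqShift_prod_hpolySeq, map_zero]

lemma sum_mul_eq_of_aeval_seqShift {m : ℕ} {c : Fin m → R} {u : ℕ → R}
    (h : aeval seqShift (X ^ m - ∑ j : Fin m, C (c j) * X ^ (j : ℕ)) u = 0) :
    ∑ j : Fin m, c j * u j = u m := by
  have h0 : u m - ∑ j : Fin m, c j * u j = 0 := by
    simpa [seqShift_pow_apply] using congrFun h 0
  exact (sub_eq_zero.mp h0).symm

end Shift

lemma Fin.prod_take_dvd_prod {M : Type*} [CommMonoid M] {m k : ℕ} (h : k ≤ m) (f : Fin m → M) :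
    ∏ i, Fin.take k h f i ∣ ∏ i, f i := by
  have : ∏ i, Fin.take k h f i = ∏ i ∈ univ.map (Fin.castLEEmb h), f i := by
    rw [prod_map]; rfl
  exact this ▸ prod_dvd_prod_of_subset _ _ _ (subset_univ _)

section Matrices

variable {R : Type*} [CommSemiring R] {m : ℕ}

lemma Tmat_apply (lam : Fin m → R) (j k : Fin m) :
    Tmat lam j k = hpolySeq (Fin.take (k + 1) k.isLt lam) j := by
  simp only [Tmat, hpolySeq, Matrix.of_apply, Nat.add_le_add_iff_right, Nat.add_sub_add_right]
  rfl

lemma Amat_mul_apply_of_lt (c : Fin m → R) (M : Matrix (Fin m) (Fin m) R) {i : Fin m} (k : Fin m)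
    (h : (i : ℕ) + 1 < m) : (Amat c * M) i k = M ⟨i + 1, h⟩ k := by
  rw [Matrix.mul_apply, Finset.sum_eq_single ⟨i + 1, h⟩]
  · simp [Amat]
  · intro j _ hj
    have hj' : (j : ℕ) ≠ i + 1 := fun h' => hj (Fin.ext h')
    simp [Amat, hj', show (i : ℕ) ≠ m - 1 by omega]
  · simp

lemma Amat_mul_apply_of_eq (c : Fin m → R) (M : Matrix (Fin m) (Fin m) R) {i : Fin m} (k : Fin m)
    (h : (i : ℕ) + 1 = m) : (Amat c * M) i k = ∑ j, c j * M j k := by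
  rw [Matrix.mul_apply]
  refine Fintype.sum_congr _ _ fun j => ?_
  rw [Amat, Matrix.of_apply, if_neg (by omega), if_pos (by omega)]

lemma mul_Jmat_apply (lam : Fin m → R) (M : Matrix (Fin m) (Fin m) R) (i k : Fin m) :
    (M * Jmat lam) i k = M i k * lam k + ∑ j : Fin m, if (k : ℕ) = j + 1 then M i j else 0 := by
  have hJ : ∀ j, Jmat lam j k =
      (if j = k then lam k else 0) + if (k : ℕ) = j + 1 then (1 : R) else 0 := by
    intro j
    by_cases hjk : j = k <;> simp [Jmat, hjk]
  simp [Matrix.mul_apply, hJ, mul_add, Finset.sum_add_distrib]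

lemma Tmat_mul_Jmat_apply (lam : Fin m → R) (i k : Fin m) :
    (Tmat lam * Jmat lam) i k = hpolySeq (Fin.take (k + 1) k.isLt lam) (i + 1) := by
  have hprev : (∑ j : Fin m, if (k : ℕ) = j + 1 then Tmat lam i j else 0)
      = hpolySeq (Fin.take k k.isLt.le lam) i := by
    obtain ⟨_ | k, hk⟩ := k
    · simp [hpolySeq_fin_zero]
    · rw [Finset.sum_eq_single ⟨k, by omega⟩, if_pos rfl, Tmat_apply]
      · intro j _ hj
        exact if_neg fun h => hj (Fin.ext (by simp only at h ⊢; omega))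
      · simp
  rw [mul_Jmat_apply, hpolySeq_succ, Tmat_apply, hprev, mul_comm]
  rfl

end Matrices

theorem companion_schur_general {R : Type*} [CommRing R] (m : ℕ)
    (lam c : Fin m → R)
    (hc : (Polynomial.X ^ m - ∑ j : Fin m, Polynomial.C (c j) * Polynomial.X ^ (j:ℕ))
        = ∏ i : Fin m, (Polynomial.X - Polynomial.C (lam i))) :
    Amat c * Tmat lam = Tmat lam * Jmat lam := by
  ext i k
  rw [Tmat_mul_Jmat_apply]
  by_cases h : (i : ℕ) + 1 < m
  · rw [Amat_mul_apply_of_lt _ _ _ h, Tmat_apply]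
  · replace h : (i : ℕ) + 1 = m := by omega
    have hrec := aeval_seqShift_hpolySeq_of_dvd (Fin.take (k + 1) k.isLt lam)
      (hc ▸ Fin.prod_take_dvd_prod k.isLt fun i => X - C (lam i))
    rw [Amat_mul_apply_of_eq _ _ _ h, h, ← sum_mul_eq_of_aeval_seqShift hrec]
    simp only [Tmat_apply]

/-- Schur decomposition of the Sylvester companion matrix: `A T = T J`. -/
theorem companion_schur {R : Type*} [CommRing R] (m : ℕ) (hm : 1 ≤ m)
    (lam c : Fin m → R)
    (hc : (Polynomial.X ^ m - ∑ j : Fin m, Polynomial.C (c j) * Polynomial.X ^ (j:ℕ))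
        = ∏ i : Fin m, (Polynomial.X - Polynomial.C (lam i))) :
    Amat c * Tmat lam = Tmat lam * Jmat lam :=
  companion_schur_general m lam c hc
end

section
/- Let $R$ be a commutative ring, and for $j \geq 1$ let $x_1, x_2, \dots \in R$. For integers $i > j \geq 1$, the identity $\sum_{k=j}^{i} (-1)^{i-k}\, e_{i-k}(x_1,\dots,x_{i-1})\, h_{k-j}(x_1,\dots,x_j) = 0$ holds, where $e_r$ and $h_r$ denote respectively the elementary and complete homogeneous symmetric polynomials (with $e_0 = h_0 = 1$). -/
open Finset Polynomial

/-!
Generating functions: `∏_{a<j} (1 - x_a X)⁻¹` has coefficients `h_r(x_0,…,x_{j-1})` and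
`∏_{a<N} (1 - x_a X)` has coefficients `(-1)^r e_r(x_0,…,x_{N-1})`. For `j ≤ N` their product
telescopes to `∏_{j≤a<N} (1 - x_a X)`, a polynomial of degree `N - j`; the sum in the theorem
is its coefficient of `X^(i-j)` for `N = i - 1`, which exceeds that degree.
-/

namespace PowerSeries

section CommSemiring

variable {R : Type*} [CommSemiring R]

noncomputable def geomSeries (a : R) : R⟦X⟧ := rescale a (mk 1)

@[simp]
theorem coeff_geomSeries (a : R) (n : ℕ) : coeff n (geomSeries a) = a ^ n := by
  simp [geomSeries, coeff_rescale]

theorem hpoly_eq_coeff_prod_geomSeries {k : ℕ} (y : Fin k → R) (r : ℕ) :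
    hpoly r y = coeff r (∏ i, geomSeries (y i)) := by
  classical
  rw [coeff_prod, hpoly, ← piAntidiag_univ_fin_eq_antidiagonalTuple]
  refine sum_nbij' (fun f => Finsupp.equivFunOnFinite.symm f) (fun l => l) ?_ ?_ ?_ ?_ ?_ <;>
    simp

end CommSemiring

section CommRing

variable {R : Type*} [CommRing R]

theorem geomSeries_mul_one_sub_C_mul_X (a : R) : geomSeries a * (1 - C a * X) = 1 := by
  rw [geomSeries, ← rescale_X, ← map_one (rescale a), ← map_sub, ← map_mul,
    mk_one_mul_one_sub_eq_one, map_one]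

theorem prod_geomSeries_mul_prod_one_sub_C_mul_X {ι : Type*} [DecidableEq ι] {s t : Finset ι}
    (hst : s ⊆ t) (y : ι → R) :
    (∏ i ∈ s, geomSeries (y i)) * ∏ i ∈ t, (1 - C (y i) * X) =
      ∏ i ∈ t \ s, (1 - C (y i) * X) := by
  rw [← prod_sdiff hst, mul_left_comm, ← prod_mul_distrib]
  simp [geomSeries_mul_one_sub_C_mul_X]

theorem coeff_prod_one_sub_C_mul_X {ι : Type*} (s : Finset ι) (y : ι → R) (n : ℕ) :
    coeff n (∏ i ∈ s, (1 - C (y i) * X)) = (-1) ^ n * ∑ t ∈ s.powersetCard n, ∏ i ∈ t, y i := by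
  classical
  have hfactor (i : ι) : 1 - C (y i) * X = 1 + C (-y i) * X := by simp [sub_eq_add_neg]
  simp_rw [hfactor, prod_one_add, prod_mul_distrib, prod_const, ← map_prod, map_sum,
    coeff_C_mul_X_pow, sum_ite, sum_const_zero, add_zero, powersetCard_eq_filter, mul_sum]
  refine sum_congr (by simp [eq_comm]) fun t ht => ?_
  rw [prod_neg, (mem_filter.mp ht).2]

theorem neg_one_pow_mul_epoly_eq_coeff_prod {k : ℕ} (y : Fin k → R) (r : ℕ) :
    (-1) ^ r * epoly r y = coeff r (∏ i, (1 - C (y i) * X)) := by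
  rw [coeff_prod_one_sub_C_mul_X, epoly]

end CommRing

end PowerSeries

theorem sum_antidiagonal_hpoly_mul_epoly_eq_zero {R : Type*} [CommRing R] (x : ℕ → R)
    {j N n : ℕ} (hjN : j ≤ N) (hn : N < j + n) :
    ∑ p ∈ antidiagonal n,
      hpoly p.1 (fun t : Fin j => x t) * ((-1) ^ p.2 * epoly p.2 (fun t : Fin N => x t)) = 0 := by
  have hsub : range j ⊆ range N := range_subset_range.mpr hjN
  have hcard : #(range N \ range j) < n := by
    rw [card_sdiff_of_subset hsub, card_range, card_range]
    omega
  have hvanish : PowerSeries.coeff n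
      (∏ i ∈ range N \ range j, (1 - PowerSeries.C (x i) * PowerSeries.X)) = 0 := by
    rw [PowerSeries.coeff_prod_one_sub_C_mul_X, powersetCard_eq_empty.mpr hcard, sum_empty,
      mul_zero]
  rw [← PowerSeries.prod_geomSeries_mul_prod_one_sub_C_mul_X hsub, PowerSeries.coeff_mul,
    ← Fin.prod_univ_eq_prod_range (fun i => PowerSeries.geomSeries (x i)),
    ← Fin.prod_univ_eq_prod_range (fun i => 1 - PowerSeries.C (x i) * PowerSeries.X)] at hvanish
  simpa only [PowerSeries.hpoly_eq_coeff_prod_geomSeries,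
    PowerSeries.neg_one_pow_mul_epoly_eq_coeff_prod] using hvanish

theorem esymm_hsymm_orthogonality_general {R : Type*} [CommRing R] (x : ℕ → R)
    (i j : ℕ) (hij : j < i) :
    ∑ k ∈ Finset.Icc j i,
      (-1 : R) ^ (i - k) * epoly (i - k) (fun t : Fin (i - 1) => x (t : ℕ))
        * hpoly (k - j) (fun t : Fin j => x (t : ℕ)) = 0 := by
  have key := sum_antidiagonal_hpoly_mul_epoly_eq_zero x
    (by omega : j ≤ i - 1) (by omega : i - 1 < j + (i - j))
  rw [← key, Nat.sum_antidiagonal_eq_sum_range_succ_mk, ← Ico_add_one_right_eq_Icc,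
    sum_Ico_eq_sum_range, show i + 1 - j = (i - j).succ by omega]
  refine sum_congr rfl fun k _ => ?_
  simp only [add_tsub_cancel_left, Nat.sub_sub]
  ring

/-- `∑_{k=j}^{i} (-1)^{i-k} e_{i-k}(x_1,…,x_{i-1}) h_{k-j}(x_1,…,x_j) = 0` for `i > j ≥ 1`.
Here `x 0 = x_1`, etc. -/
theorem esymm_hsymm_orthogonality {R : Type*} [CommRing R] (x : ℕ → R)
    (i j : ℕ) (hj : 1 ≤ j) (hij : j < i) :
    ∑ k ∈ Finset.Icc j i,
      (-1 : R) ^ (i - k) * epoly (i - k) (fun t : Fin (i - 1) => x (t : ℕ))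
        * hpoly (k - j) (fun t : Fin j => x (t : ℕ)) = 0 :=
  esymm_hsymm_orthogonality_general x i j hij
end

section
/- Let $R$ be a commutative ring, $m \geq 2$, and let $\beta_1,\dots,\beta_m \in R$ and $\lambda_1,\dots,\lambda_m \in R$. Let $B$ be the $m\times m$ matrix whose last row is $(\beta_1,\dots,\beta_m)$ and all other rows zero, and let $T$ be the lower unitriangular matrix with $T_{j,k} = \omega_{j,k} := h_{j-k}(\lambda_1,\dots,\lambda_k)$ for $j \geq k$. Then $D := T^{-1} B T = B T$ has all rows zero except the last, and its last-row entries are $d_{m,k} = \sum_{j=k}^{m} \beta_j\, \omega_{j,k}$ for $k = 1,\dots,m$. -/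
open Finset Polynomial

/-- `D = T⁻¹ B T = B T` has only its last row nonzero, with entries
`d_{m,k} = ∑_{j=k}^m β_j ω_{j,k}`. -/
theorem last_row_conjugation {R : Type*} [CommRing R] (m : ℕ) (hm : 2 ≤ m)
    (beta lam : Fin m → R)
    (B : Matrix (Fin m) (Fin m) R)
    (hB : B = Matrix.of fun i j : Fin m => if (i:ℕ) = m - 1 then beta j else 0) :
    (Tmat lam)⁻¹ * B * Tmat lam = B * Tmat lam
    ∧ (∀ i j : Fin m, (i:ℕ) ≠ m - 1 → (B * Tmat lam) i j = 0)
    ∧ (∀ k : Fin m, (B * Tmat lam) ⟨m - 1, by omega⟩ k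
        = ∑ j ∈ Finset.Ici k, beta j *
            hpoly ((j:ℕ) - (k:ℕ)) (fun t : Fin ((k:ℕ)+1) => lam (Fin.castLE k.isLt t))) := by
  have hdiag : ∀ k : Fin m, Tmat lam k k = 1 := by
    intro k
    simp [Tmat, hpoly, Finset.Nat.antidiagonalTuple_zero_right]
  have hlow : (Tmat lam).BlockTriangular OrderDual.toDual := by
    intro i j hij
    simp only [OrderDual.toDual_lt_toDual] at hij
    have : ¬ ((j:ℕ) ≤ (i:ℕ)) := not_le.mpr (Fin.lt_def.mp hij)
    simp only [Tmat, Matrix.of_apply, if_neg this]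
  have hdet : (Tmat lam).det = 1 := by
    rw [Matrix.det_of_lowerTriangular _ hlow]
    simp [hdiag]
  have hTB : Tmat lam * B = B := by
    ext i j
    subst hB
    simp only [Matrix.mul_apply, Matrix.of_apply]
    rcases eq_or_ne (i : ℕ) (m - 1) with hi | hi
    · rw [Finset.sum_eq_single i]
      · simp [hi, hdiag]
      · intro b _ hb
        have : (b : ℕ) ≠ m - 1 := fun h => hb (Fin.ext (h.trans hi.symm))
        simp [this]
      · simp
    · rw [Finset.sum_eq_single i]
      · simp [hi]
      · intro b _ hb
        rcases eq_or_ne (b:ℕ) (m-1) with h | h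
        · have hbi : ¬ ((b:ℕ) ≤ (i:ℕ)) := by have := i.isLt; omega
          simp only [Tmat, Matrix.of_apply, if_neg hbi, zero_mul]
        · simp [h]
      · simp
  have hinv : (Tmat lam)⁻¹ * Tmat lam = 1 :=
    Matrix.nonsing_inv_mul _ (by simp [hdet])
  refine ⟨?_, ?_, ?_⟩
  · calc (Tmat lam)⁻¹ * B * Tmat lam = (Tmat lam)⁻¹ * (Tmat lam * B) * Tmat lam := by rw [hTB]
    _ = B * Tmat lam := by rw [← Matrix.mul_assoc ((Tmat lam)⁻¹), hinv, Matrix.one_mul]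
  · intro i j hi
    subst hB
    simp [Matrix.mul_apply, hi]
  · intro k
    subst hB
    simp only [Matrix.mul_apply, Matrix.of_apply, if_pos rfl]
    rw [← Finset.sum_subset (Finset.subset_univ (Finset.Ici k))]
    · apply Finset.sum_congr rfl
      intro j hj
      rw [Finset.mem_Ici] at hj
      simp only [Tmat, Matrix.of_apply, if_pos (Fin.le_def.mp hj), if_true]
    · intro j _ hj
      rw [Finset.mem_Ici] at hj
      have : ¬ ((k:ℕ) ≤ (j:ℕ)) := fun h => hj (Fin.le_def.mpr h)
      simp only [Tmat, Matrix.of_apply, if_neg this, mul_zero]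
end
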